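/- arXiv:2604.12433 — 3 statements merged into one kernel-verified Lean document; each statement's English description precedes it below -/
import Mathlib

section
/- Let M be a square matrix over a field with index set V, and let A ⊆ V. Then rank(M) − corank((M + I_A)[A]) ≥ 0, where (M + I_A)[A] is the principal submatrix of M + I_A on A and corank means |A| minus rank. -/
open Matrix Polynomial

/-- Principal submatrix of `M` on the index set `A`. -/
def psub {V F : Type*} [Fintype V] [DecidableEq V] [Field F]
    (M : Matrix V V F) (A : Finset V) : Matrix A A F :=
  M.submatrix (fun a => a.1) (fun a => a.1)

/-- Diagonal 0/1 matrix with 1's exactly at positions in `A`. -/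
def indDiag {V F : Type*} [Fintype V] [DecidableEq V] [Field F]
    (A : Finset V) : Matrix V V F :=
  Matrix.diagonal (fun v => if v ∈ A then (1 : F) else 0)

/-!
Writing `B = M[A]`, the matrix `(M + I_A)[A]` is `B + 1`. Since `1 = (B + 1) - B`, subadditivity
of rank gives `|A| ≤ rank (B + 1) + rank B`, i.e. `corank (B + 1) ≤ rank B`, and a principal
submatrix has rank at most `rank M`.
-/

namespace Matrix

variable {m n K : Type*} [Fintype n] [Field K]

theorem rank_add_le (A B : Matrix m n K) : (A + B).rank ≤ A.rank + B.rank := by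
  have hrange : LinearMap.range (A + B).mulVecLin ≤
      LinearMap.range A.mulVecLin ⊔ LinearMap.range B.mulVecLin := by
    rintro _ ⟨x, rfl⟩
    rw [mulVecLin_add, LinearMap.add_apply]
    exact Submodule.add_mem_sup (LinearMap.mem_range_self _ x) (LinearMap.mem_range_self _ x)
  exact (Submodule.finrank_mono hrange).trans (Submodule.finrank_add_le_finrank_add_finrank _ _)

theorem rank_neg (A : Matrix m n K) : (-A).rank = A.rank := by
  have hneg : (-A).mulVecLin = -A.mulVecLin := LinearMap.ext fun v => neg_mulVec v A
  rw [rank, rank, hneg, LinearMap.range_neg]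

theorem card_le_rank_add_rank_add_one [DecidableEq n] (B : Matrix n n K) :
    Fintype.card n ≤ B.rank + (B + 1).rank :=
  calc Fintype.card n = (1 : Matrix n n K).rank := rank_one.symm
    _ = ((B + 1) + -B).rank := by rw [add_neg_cancel_comm]
    _ ≤ (B + 1).rank + (-B).rank := rank_add_le _ _
    _ = B.rank + (B + 1).rank := by rw [rank_neg, add_comm]

end Matrix

section PrincipalSubmatrix

variable {V F : Type*} [Fintype V] [DecidableEq V] [Field F]

theorem psub_add_indDiag (M : Matrix V V F) (A : Finset V) :
    psub (M + indDiag A) A = psub M A + 1 := by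
  ext a b
  by_cases hab : a = b
  · subst hab
    simp [psub, indDiag]
  · simp [psub, indDiag, hab, Subtype.val_injective.ne hab]

theorem rank_psub_le (M : Matrix V V F) (A : Finset V) : (psub M A).rank ≤ M.rank :=
  rank_submatrix_le M _ _

end PrincipalSubmatrix

theorem rank_sub_corank_add_indicator_nonneg
    {V F : Type*} [Fintype V] [DecidableEq V] [Field F]
    (M : Matrix V V F) (A : Finset V) :
    (0 : ℤ) ≤ (M.rank : ℤ) - ((A.card : ℤ) - ((psub (M + indDiag A) A).rank : ℤ)) := by
  have hcard := card_le_rank_add_rank_add_one (psub M A)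
  have hsub := rank_psub_le M A
  rw [Fintype.card_coe] at hcard
  rw [psub_add_indDiag]
  omega
end

section
/- Let M be a nonsingular square matrix over a field indexed by finite set V. Define P_{δτ}(M,z) = Σ_{A⊆V} z^{rank((M+I_A)[A]) + rank(M[A^c])} and P_{τδ}(N,z) = Σ_{A⊆V} z^{rank(N+I_A) − corank(N[A])}. Then P_{δτ}(M, z) = P_{τδ}(M⁻¹, z). -/
open Matrix Polynomial

/-!
Write `I_S` for `indDiag S`. For every square `N`, the matrix `I_S N + I_Sᶜ` is block upper
triangular `[[N[S], *], [0, 1]]` with respect to `V = S ⊔ Sᶜ`, so its rank is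
`rank N[S] + |Sᶜ|`. Right multiplication by the invertible `M` turns `I_A M⁻¹ + I_Aᶜ` into
`I_Aᶜ M + I_A`, which gives the nullity theorem `rank M[Aᶜ] + |A| = rank M⁻¹[A] + |Aᶜ|`,
and turns `M⁻¹ + I_A` into `I_A (M + I_A) + I_Aᶜ`. These two rank identities match the
exponents of the two sums term by term.
-/

lemma extend_val_apply_of_notMem {α β : Type*} [Zero β] {S : Finset α} (x : S → β) {u : α}
    (hu : u ∉ S) : Function.extend Subtype.val x 0 u = 0 := by
  rw [Function.extend_apply' _ _ _ (by simpa using hu), Pi.zero_apply]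

lemma extend_val_restrict_eq {α β : Type*} [Zero β] {S : Finset α} (v : α → β)
    (hv : ∀ u ∉ S, v u = 0) : Function.extend Subtype.val (fun a : S => v a) 0 = v := by
  ext u
  by_cases hu : u ∈ S
  · exact Subtype.val_injective.extend_apply _ _ ⟨u, hu⟩
  · rw [extend_val_apply_of_notMem _ hu, hv u hu]

section

variable {V F : Type*} [Fintype V] [DecidableEq V] [Field F]

lemma psub_mulVec_apply (N : Matrix V V F) (S : Finset V) (x : S → F) (a : S) :
    (psub N S *ᵥ x) a = (N *ᵥ Function.extend Subtype.val x 0) a := by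
  simp only [mulVec, dotProduct, psub, submatrix_apply]
  rw [← Finset.sum_subset (Finset.subset_univ S), ← Finset.sum_attach S]
  · simp only [Finset.univ_eq_attach, Subtype.val_injective.extend_apply]
  · intro v _ hv
    rw [extend_val_apply_of_notMem x hv, mul_zero]

lemma indDiag_mulVec_apply (S : Finset V) (v : V → F) (u : V) :
    (indDiag S *ᵥ v) u = if u ∈ S then v u else 0 := by
  simp [indDiag, mulVec_diagonal]

lemma indDiag_add_indDiag_compl (S : Finset V) :
    indDiag S + indDiag Sᶜ = (1 : Matrix V V F) := by
  ext u w
  by_cases h : u ∈ S <;> simp [indDiag, diagonal, one_apply, h]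

lemma indDiag_mul_indDiag (S : Finset V) :
    indDiag S * indDiag S = (indDiag S : Matrix V V F) := by
  simp [indDiag, diagonal_mul_diagonal]

lemma indDiag_mul_add_indDiag_compl_mulVec_apply (N : Matrix V V F) (S : Finset V)
    (v : V → F) (u : V) :
    ((indDiag S * N + indDiag Sᶜ) *ᵥ v) u = if u ∈ S then (N *ᵥ v) u else v u := by
  by_cases h : u ∈ S <;> simp [add_mulVec, ← mulVec_mulVec, indDiag_mulVec_apply, h]

lemma ker_indDiag_mul_add_indDiag_compl (N : Matrix V V F) (S : Finset V) :
    LinearMap.ker (indDiag S * N + indDiag Sᶜ).mulVecLin =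
      (LinearMap.ker (psub N S).mulVecLin).map
        (Function.ExtendByZero.linearMap F ((↑) : S → V)) := by
  ext v
  simp only [LinearMap.mem_ker, Submodule.mem_map, mulVecLin_apply]
  constructor
  · intro hv
    have hv' (u : V) := congrFun hv u
    simp only [indDiag_mul_add_indDiag_compl_mulVec_apply, Pi.zero_apply] at hv'
    have hsupp := extend_val_restrict_eq (S := S) v fun u hu => by simpa [hu] using hv' u
    refine ⟨fun a => v a, funext fun a => ?_, hsupp⟩
    rw [psub_mulVec_apply, hsupp]
    simpa [a.2] using hv' a
  · rintro ⟨x, hx, rfl⟩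
    show (_ *ᵥ Function.extend Subtype.val x 0) = 0
    ext u
    rw [indDiag_mul_add_indDiag_compl_mulVec_apply, Pi.zero_apply]
    by_cases hu : u ∈ S
    · rw [if_pos hu, ← psub_mulVec_apply N S x ⟨u, hu⟩, hx, Pi.zero_apply]
    · rw [if_neg hu, extend_val_apply_of_notMem x hu]

lemma rank_indDiag_mul_add_indDiag_compl (N : Matrix V V F) (S : Finset V) :
    (indDiag S * N + indDiag Sᶜ).rank = (psub N S).rank + Sᶜ.card := by
  have hker := congrArg (fun p : Submodule F (V → F) => Module.finrank F p)
    (ker_indDiag_mul_add_indDiag_compl N S)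
  rw [← (Submodule.equivMapOfInjective _
    (Function.extend_injective Subtype.val_injective (0 : V → F)) _).finrank_eq] at hker
  have hN := LinearMap.finrank_range_add_finrank_ker (indDiag S * N + indDiag Sᶜ).mulVecLin
  have hsub := LinearMap.finrank_range_add_finrank_ker (psub N S).mulVecLin
  simp only [Module.finrank_fintype_fun_eq_card, Fintype.card_coe] at hN hsub
  have hcard := Finset.card_add_card_compl S
  unfold Matrix.rank
  omega

lemma rank_psub_compl_add_card (M : Matrix V V F) (hM : IsUnit M) (A : Finset V) :
    (psub M Aᶜ).rank + A.card = (psub M⁻¹ A).rank + Aᶜ.card := by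
  have hdet : IsUnit M.det := (isUnit_iff_isUnit_det M).mp hM
  have key : (indDiag A * M⁻¹ + indDiag Aᶜ) * M = indDiag Aᶜ * M + indDiag A := by
    rw [add_mul, Matrix.mul_assoc, nonsing_inv_mul M hdet, Matrix.mul_one, add_comm]
  have hcompl := rank_indDiag_mul_add_indDiag_compl M Aᶜ
  rw [compl_compl] at hcompl
  rw [← hcompl, ← rank_indDiag_mul_add_indDiag_compl, ← key,
    rank_mul_eq_left_of_isUnit_det M _ hdet]

lemma rank_inv_add_indDiag (M : Matrix V V F) (hM : IsUnit M) (A : Finset V) :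
    (M⁻¹ + indDiag A).rank = (psub (M + indDiag A) A).rank + Aᶜ.card := by
  have hdet : IsUnit M.det := (isUnit_iff_isUnit_det M).mp hM
  have key : (M⁻¹ + indDiag A) * M = indDiag A * (M + indDiag A) + indDiag Aᶜ := by
    rw [add_mul, nonsing_inv_mul M hdet, Matrix.mul_add, indDiag_mul_indDiag, add_assoc,
      indDiag_add_indDiag_compl, add_comm]
  rw [← rank_indDiag_mul_add_indDiag_compl, ← key, rank_mul_eq_left_of_isUnit_det M _ hdet]

end

theorem partialDeltaTau_eq_partialTauDelta_inv
    {V F : Type*} [Fintype V] [DecidableEq V] [Field F]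
    (M : Matrix V V F) (hM : IsUnit M) :
    (∑ A : Finset V, (X : Polynomial ℤ) ^
        ((psub (M + indDiag A) A).rank + (psub M (Finset.univ \ A)).rank)) =
      ∑ A : Finset V, (X : Polynomial ℤ) ^
        ((M⁻¹ + indDiag A).rank - (A.card - (psub M⁻¹ A).rank)) := by
  refine Finset.sum_congr rfl fun A _ => congrArg _ ?_
  have hnullity := rank_psub_compl_add_card M hM A
  have hinv := rank_inv_add_indDiag M hM A
  have hcard := Finset.card_add_card_compl A
  have hle : (psub M⁻¹ A).rank ≤ A.card := by
    simpa using (psub M⁻¹ A).rank_le_card_width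
  rw [← Finset.compl_eq_univ_sdiff]
  omega
end

section
/- Let M be a square matrix over a field indexed by V = V₁ ⊔ V₂ that is block-diagonal with respect to this partition. Then P_τ(M,z) = P_τ(M[V₁],z) · P_τ(M[V₂],z), where P_τ(N,z) = Σ_{A} z^{rank(N + I_A)} summed over all subsets A of the index set of N. -/
open Matrix Polynomial

/-- The partial-⟨τ⟩ polynomial of a square matrix. -/
noncomputable def partialTau {V F : Type*} [Fintype V] [DecidableEq V] [Field F]
    (M : Matrix V V F) : Polynomial ℤ :=
  ∑ A : Finset V, (X : Polynomial ℤ) ^ (M + indDiag A).rank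

/-! With `M` block diagonal, `M + I_A` is block diagonal with blocks `M[V₁] + I_{A ∩ V₁}` and
`M[V₂] + I_{A ∩ V₂}`, so its rank is the sum of the ranks of these blocks. As `A ↦ (A ∩ V₁, A ∩ V₂)`
is a bijection onto pairs of subsets, the sum defining `P_τ(M, z)` factors. -/

open Module

theorem Submodule.finrank_prod {K M N : Type*} [DivisionRing K] [AddCommGroup M] [AddCommGroup N]
    [Module K M] [Module K N] (p : Submodule K M) (q : Submodule K N)
    [FiniteDimensional K p] [FiniteDimensional K q] :
    finrank K (p.prod q) = finrank K p + finrank K q := by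
  have hpq : p.prod q = LinearMap.range (p.subtype.prodMap q.subtype) := by
    rw [LinearMap.range_prodMap, p.range_subtype, q.range_subtype]
  rw [hpq, LinearMap.finrank_range_of_inj (Prod.map_injective.2 ⟨p.injective_subtype,
    q.injective_subtype⟩), Module.finrank_prod]

theorem LinearMap.finrank_range_prodMap {K M₁ M₂ N₁ N₂ : Type*} [DivisionRing K]
    [AddCommGroup M₁] [AddCommGroup M₂] [AddCommGroup N₁] [AddCommGroup N₂]
    [Module K M₁] [Module K M₂] [Module K N₁] [Module K N₂]
    [FiniteDimensional K M₁] [FiniteDimensional K M₂] (f : M₁ →ₗ[K] N₁) (g : M₂ →ₗ[K] N₂) :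
    finrank K (range (f.prodMap g)) = finrank K (range f) + finrank K (range g) := by
  rw [range_prodMap, Submodule.finrank_prod]

theorem Matrix.rank_fromBlocks_zero_zero {l m n o K : Type*} [Fintype m] [Fintype o] [Field K]
    (B : Matrix l m K) (C : Matrix n o K) :
    (fromBlocks B 0 0 C).rank = B.rank + C.rank := by
  let eₘ := LinearEquiv.sumArrowLequivProdArrow m o K K
  let eₗ := LinearEquiv.sumArrowLequivProdArrow l n K K
  have hmul : (fromBlocks B 0 0 C).mulVecLin =
      eₗ.symm.toLinearMap ∘ₗ B.mulVecLin.prodMap C.mulVecLin ∘ₗ eₘ.toLinearMap := by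
    ext x (i | i) <;>
      simp only [eₘ, eₗ, mulVecBilin_apply, fromBlocks_mulVec, zero_mulVec, add_zero, zero_add,
      Sum.elim_inl, Sum.elim_inr, LinearMap.coe_comp, LinearEquiv.coe_coe, Function.comp_apply,
      LinearMap.prodMap_apply, LinearEquiv.sumArrowLequivProdArrow_symm_apply_inl,
      LinearEquiv.sumArrowLequivProdArrow_symm_apply_inr] <;> rfl
  rw [rank, hmul, LinearMap.range_comp, LinearMap.range_comp_of_range_eq_top _ eₘ.range,
    LinearEquiv.finrank_map_eq, LinearMap.finrank_range_prodMap, rank, rank]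

theorem indDiag_eq_fromBlocks {V₁ V₂ F : Type*} [Fintype V₁] [DecidableEq V₁] [Fintype V₂]
    [DecidableEq V₂] [Field F] (A : Finset (V₁ ⊕ V₂)) :
    (indDiag A : Matrix (V₁ ⊕ V₂) (V₁ ⊕ V₂) F) =
      fromBlocks (indDiag A.toLeft) 0 0 (indDiag A.toRight) := by
  rw [indDiag, indDiag, indDiag, fromBlocks_diagonal]
  congr
  funext v
  cases v <;> simp

theorem partialTau_fromBlocks_zero_zero {V₁ V₂ F : Type*} [Fintype V₁] [DecidableEq V₁]
    [Fintype V₂] [DecidableEq V₂] [Field F] (B : Matrix V₁ V₁ F) (C : Matrix V₂ V₂ F) :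
    partialTau (fromBlocks B 0 0 C) = partialTau B * partialTau C := by
  rw [partialTau, partialTau, partialTau, Finset.sum_mul_sum, ← Fintype.sum_prod_type']
  refine Fintype.sum_equiv Finset.sumEquiv.toEquiv _ _ fun A => ?_
  rw [indDiag_eq_fromBlocks, fromBlocks_add, add_zero, add_zero, rank_fromBlocks_zero_zero,
    pow_add]
  rfl

theorem partialTau_blockDiagonal
    {V₁ V₂ F : Type*} [Fintype V₁] [DecidableEq V₁] [Fintype V₂] [DecidableEq V₂] [Field F]
    (M : Matrix (V₁ ⊕ V₂) (V₁ ⊕ V₂) F)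
    (h₁₂ : ∀ (u : V₁) (v : V₂), M (Sum.inl u) (Sum.inr v) = 0)
    (h₂₁ : ∀ (u : V₂) (v : V₁), M (Sum.inr u) (Sum.inl v) = 0) :
    partialTau M =
      partialTau (M.submatrix Sum.inl Sum.inl) * partialTau (M.submatrix Sum.inr Sum.inr) := by
  have hM : M = fromBlocks (M.submatrix Sum.inl Sum.inl) 0 0 (M.submatrix Sum.inr Sum.inr) := by
    ext (i | i) (j | j) <;> simp [h₁₂, h₂₁]
  exact (congrArg partialTau hM).trans (partialTau_fromBlocks_zero_zero _ _)
end
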